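/- Let n, m be integers with 1 ≤ m ≤ n, and consider the rectangular flag-shaped blocker B_n(m, m−1) (the case t = m−1). Then there exist (n−1)² + 1 − (m−1)(n−m) permutation matrices of 123-avoiding permutations of {1,…,n} that are linearly independent over ℝ and each of which intersects B_n(m, m−1) exactly once. (Together with the general upper bound, B_n(m, m−1) determines a face of the 123-avoiding polytope of exactly the maximum dimension (n−1)² + 1 − (m−1)(n−m).) -/

import Mathlib

/-- A permutation of `Fin n` is `123`-avoiding if it has no increasing
subsequence of length 3. -/
def Avoids123 {n : ℕ} (σ : Equiv.Perm (Fin n)) : Prop :=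
  ∀ i j k : Fin n, i < j → j < k → σ i < σ j → ¬ σ j < σ k

/-- A set of positions is a blocker of all `n × n` `123`-avoiding permutation
matrices if every `123`-avoiding permutation meets it. -/
def IsBlocker {n : ℕ} (B : Set (Fin n × Fin n)) : Prop :=
  ∀ σ : Equiv.Perm (Fin n), Avoids123 σ → ∃ i : Fin n, (i, σ i) ∈ B

/-- The flag-shaped blocker `B_n(m,t)` (with `1`-based row/column indices
`i+1`, `j+1` for `(i,j) : Fin n × Fin n`): the "pole"
`{(i,m) : 1 ≤ i ≤ n-t}` together with the "flag"
`{(i,j) : 1 ≤ i ≤ n-m+1, m-t ≤ j ≤ m-1}`. -/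
def FlagBlocker (n m t : ℕ) : Set (Fin n × Fin n) :=
  {p | ((p.2 : ℕ) + 1 = m ∧ (p.1 : ℕ) + 1 + t ≤ n) ∨
       ((p.1 : ℕ) + m ≤ n ∧ m ≤ (p.2 : ℕ) + 1 + t ∧ (p.2 : ℕ) + 2 ≤ m)}

/-- The permutation matrix of `σ`: the real `(0,1)`-matrix with a `1` in
position `(i, j)` exactly when `j = σ i`. -/
def permMatrix (n : ℕ) (σ : Equiv.Perm (Fin n)) : Matrix (Fin n) (Fin n) ℝ :=
  fun i j => if σ i = j then 1 else 0

/-!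
The reversal `k ↦ N - 1 - k` is `123`-avoiding, and cyclically shifting its rows between `i` and
`N - 1 - j` gives a `123`-avoiding permutation through any position `(i, j)`. Take these for the
`(N - 1)²` positions off the two anti-diagonals `i + j = N - 1` and `i + j = N`, together with the
reversal itself. A chosen position below the anti-diagonal lies on no other of these permutations,
and one above it lies only on permutations through positions below, so evaluating at the chosen
positions is a triangular system and the matrices are independent. Each of them meets the rectangle
`[0, N - m] × [0, m - 1]` exactly once, except those through the `(m - 1)(N - m)` positions strictly
below and to the right of it, which are discarded.
-/

theorem linearIndependent_of_triangular {ι R M : Type*} [Ring R] [NoZeroDivisors R]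
    [AddCommGroup M] [Module R M] (v : ι → M) (φ : ι → M →ₗ[R] R) (rank : ι → ℕ)
    (hdiag : ∀ i, φ i (v i) ≠ 0) (htri : ∀ i j, j ≠ i → φ i (v j) ≠ 0 → rank j < rank i) :
    LinearIndependent R v := by
  classical
  rw [linearIndependent_iff']
  intro s g hg i
  induction hr : rank i using Nat.strong_induction_on generalizing i with
  | _ r ih =>
    intro hi
    have hφ : ∑ j ∈ s, g j * φ i (v j) = 0 := by simpa using congrArg (φ i) hg
    rw [Finset.sum_eq_single_of_mem i hi fun j hj hji => ?_] at hφ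
    · exact (mul_eq_zero.mp hφ).resolve_right (hdiag i)
    · by_cases hij : φ i (v j) = 0
      · rw [hij, mul_zero]
      · rw [ih _ (hr ▸ htri i j hji hij) j rfl hj, zero_mul]

theorem Fin.card_subtype_le_val (n a : ℕ) : Fintype.card {i : Fin n // a ≤ (i : ℕ)} = n - a := by
  simp_rw [← not_lt]
  rw [Fintype.card_subtype_compl, Fintype.card_subtype, Fin.card_filter_val_lt, Fintype.card_fin]
  omega

theorem card_fin_sq_not_corner (n a b : ℕ) :
    Fintype.card {q : Fin n × Fin n // ¬(a ≤ (q.1 : ℕ) ∧ b ≤ (q.2 : ℕ))} =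
      n ^ 2 - (n - a) * (n - b) := by
  rw [Fintype.card_subtype_compl,
    Fintype.card_congr (Equiv.subtypeProdEquivProd (p := fun i : Fin n => a ≤ (i : ℕ))
      (q := fun j : Fin n => b ≤ (j : ℕ)))]
  simp only [Fintype.card_prod, Fin.card_subtype_le_val, Fintype.card_fin, sq]

/-- The reversal `k ↦ N - 1 - k` with the rows between `i` and `N - 1 - j` rotated so that row
`i` takes the value `j`. -/
def reverseThroughFun (N i j k : ℕ) : ℕ :=
  if k = i then j
  else if i < k ∧ k + j < N then N - k
  else if k < i ∧ N ≤ k + j + 1 then N - 2 - k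
  else N - 1 - k

section reverseThroughFun

variable {N i j k : ℕ}

theorem reverseThroughFun_lt (hj : j < N) (hk : k < N) : reverseThroughFun N i j k < N := by
  unfold reverseThroughFun; split_ifs <;> omega

theorem reverseThroughFun_swap_apply (hi : i < N) (hj : j < N) (hk : k < N) :
    reverseThroughFun N j i (reverseThroughFun N i j k) = k := by
  unfold reverseThroughFun; split_ifs <;> omega

theorem reverseThroughFun_self : reverseThroughFun N i j i = j := if_pos rfl

theorem reverseThroughFun_not_increasing {r s t : ℕ} (hrs : r < s) (hst : s < t) (ht : t < N)
    (h₁ : reverseThroughFun N i j r < reverseThroughFun N i j s) :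
    ¬ reverseThroughFun N i j s < reverseThroughFun N i j t := by
  unfold reverseThroughFun at h₁ ⊢; split_ifs at h₁ ⊢ <;> omega

theorem eq_of_reverseThroughFun_eq_of_lt_add {i' j' : ℕ} (hi : i < N) (hij : N < i + j)
    (h : reverseThroughFun N i' j' i = j) : i' = i ∧ j' = j := by
  unfold reverseThroughFun at h; split_ifs at h <;> omega

theorem eq_or_le_add_of_reverseThroughFun_eq_of_add_lt {i' j' : ℕ} (hij : i + j + 1 < N)
    (h : reverseThroughFun N i' j' i = j) : (i' = i ∧ j' = j) ∨ N ≤ i' + j' := by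
  unfold reverseThroughFun at h; split_ifs at h <;> omega

theorem existsUnique_reverseThroughFun_rect {m : ℕ} (hm : 1 ≤ m) (hmN : m ≤ N)
    (hj : j < N) (hcorner : N < i + m → j < m) :
    ∃ r < N, ∀ k < N, (k + m ≤ N ∧ reverseThroughFun N i j k < m) ↔ k = r := by
  refine ⟨if i + m ≤ N ∧ j < m then i else if i + m = N ∧ m ≤ j then N - m - 1 else N - m,
    by split_ifs <;> omega, fun k hk => ?_⟩
  unfold reverseThroughFun; split_ifs <;> omega

end reverseThroughFun

def reverseThrough {N : ℕ} (p : Fin N × Fin N) : Equiv.Perm (Fin N) where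
  toFun k := ⟨reverseThroughFun N p.1 p.2 k, reverseThroughFun_lt p.2.isLt k.isLt⟩
  invFun k := ⟨reverseThroughFun N p.2 p.1 k, reverseThroughFun_lt p.1.isLt k.isLt⟩
  left_inv k := Fin.ext (reverseThroughFun_swap_apply p.1.isLt p.2.isLt k.isLt)
  right_inv k := Fin.ext (reverseThroughFun_swap_apply p.2.isLt p.1.isLt k.isLt)

section reverseThrough

variable {N : ℕ} (p : Fin N × Fin N)

@[simp]
theorem val_reverseThrough_apply (k : Fin N) :
    (reverseThrough p k : ℕ) = reverseThroughFun N p.1 p.2 k := rfl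

theorem reverseThrough_apply_fst : reverseThrough p p.1 = p.2 :=
  Fin.ext reverseThroughFun_self

theorem avoids123_reverseThrough : Avoids123 (reverseThrough p) := fun _ _ t hrs hst h₁ =>
  reverseThroughFun_not_increasing hrs hst t.isLt h₁

end reverseThrough

theorem mem_flagBlocker_sub_one_iff {N m : ℕ} (hm : 1 ≤ m) {r c : Fin N} :
    (r, c) ∈ FlagBlocker N m (m - 1) ↔ (r : ℕ) + m ≤ N ∧ (c : ℕ) < m := by
  simp only [FlagBlocker, Set.mem_ofPred_eq]; omega

theorem existsUnique_mem_flagBlocker_reverseThrough {N m : ℕ} (hm : 1 ≤ m) (hmN : m ≤ N)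
    (p : Fin N × Fin N) (hcorner : N < p.1 + m → (p.2 : ℕ) < m) :
    ∃! k, (k, reverseThrough p k) ∈ FlagBlocker N m (m - 1) := by
  obtain ⟨r, hr, hrow⟩ := existsUnique_reverseThroughFun_rect hm hmN p.2.isLt hcorner
  simp only [mem_flagBlocker_sub_one_iff hm, val_reverseThrough_apply]
  exact ⟨⟨r, hr⟩, (hrow r hr).2 rfl, fun k hk => Fin.ext ((hrow k k.isLt).1 hk)⟩

def antidiagLevel {N : ℕ} (p : Fin N × Fin N) : ℕ :=
  if N < p.1 + p.2 then 0 else if (p.1 : ℕ) + p.2 + 1 < N then 1 else 2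

theorem linearIndependent_permMatrix_reverseThrough {ι : Type*} {N : ℕ} (p : ι → Fin N × Fin N)
    (hp : Function.Injective p) (hsum : ∀ x, ((p x).1 : ℕ) + (p x).2 ≠ N)
    (hanti : ∀ x y, ((p x).1 : ℕ) + (p x).2 + 1 = N → ((p y).1 : ℕ) + (p y).2 + 1 = N → x = y) :
    LinearIndependent ℝ fun x => permMatrix N (reverseThrough (p x)) := by
  refine linearIndependent_of_triangular _ (fun x => Matrix.entryLinearMap ℝ ℝ (p x).1 (p x).2)
    (fun x => antidiagLevel (p x)) (fun x => by simp [permMatrix, reverseThrough_apply_fst])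
    fun x y hyx hxy => ?_
  have hit : reverseThroughFun N (p y).1 (p y).2 (p x).1 = (p x).2 := by
    by_contra h
    simp [permMatrix, Fin.ext_iff, h] at hxy
  have hne : p y ≠ p x := hp.ne hyx
  have hsumy := hsum y
  unfold antidiagLevel
  by_cases hbelow : N < (p x).1 + (p x).2
  · obtain ⟨h₁, h₂⟩ := eq_of_reverseThroughFun_eq_of_lt_add (p x).1.isLt hbelow hit
    exact absurd (Prod.ext (Fin.ext h₁) (Fin.ext h₂)) hne
  by_cases habove : (p x).1 + (p x).2 + 1 < (N : ℕ)
  · rcases eq_or_le_add_of_reverseThroughFun_eq_of_add_lt habove hit with ⟨h₁, h₂⟩ | hle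
    · exact absurd (Prod.ext (Fin.ext h₁) (Fin.ext h₂)) hne
    · simp only [hbelow, habove, if_false, if_true]; split_ifs <;> omega
  · have hx : (p x).1 + (p x).2 + 1 = (N : ℕ) := by have := hsum x; omega
    have hy : ((p y).1 : ℕ) + (p y).2 + 1 ≠ N := fun hy => hyx (hanti y x hy hx)
    simp only [hbelow, habove, if_false]; split_ifs <;> omega

/-- The bijection from `Fin n × Fin n` onto the positions of `Fin (n + 1) × Fin (n + 1)` off the
anti-diagonals `i + j = n` and `i + j = n + 1`. -/
def liftPos {n : ℕ} (q : Fin n × Fin n) : Fin (n + 1) × Fin (n + 1) :=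
  if (q.1 : ℕ) + q.2 < n then (q.1.castSucc, q.2.castSucc) else (q.1.succ, q.2.succ)

section liftPos

variable {n : ℕ}

theorem val_liftPos_fst (q : Fin n × Fin n) :
    ((liftPos q).1 : ℕ) = if (q.1 : ℕ) + q.2 < n then (q.1 : ℕ) else q.1 + 1 := by
  unfold liftPos; split_ifs <;> rfl

theorem val_liftPos_snd (q : Fin n × Fin n) :
    ((liftPos q).2 : ℕ) = if (q.1 : ℕ) + q.2 < n then (q.2 : ℕ) else q.2 + 1 := by
  unfold liftPos; split_ifs <;> rfl

theorem liftPos_injective : Function.Injective (liftPos (n := n)) := by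
  intro q q' h
  have h₁ := congrArg (fun p => (p.1 : ℕ)) h
  have h₂ := congrArg (fun p => (p.2 : ℕ)) h
  simp only [val_liftPos_fst, val_liftPos_snd] at h₁ h₂
  ext <;> split_ifs at h₁ h₂ <;> omega

theorem liftPos_add_lt_or_lt (q : Fin n × Fin n) :
    ((liftPos q).1 : ℕ) + (liftPos q).2 < n ∨ n + 1 < ((liftPos q).1 : ℕ) + (liftPos q).2 := by
  rw [val_liftPos_fst, val_liftPos_snd]; split_ifs <;> omega

end liftPos

theorem liftPos_snd_lt_of_lt_fst_add {n m : ℕ} (q : Fin n × Fin n)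
    (hq : ¬(n + 1 - m ≤ (q.1 : ℕ) ∧ m - 1 ≤ (q.2 : ℕ))) :
    n + 1 < (liftPos q).1 + m → ((liftPos q).2 : ℕ) < m := by
  rw [val_liftPos_fst, val_liftPos_snd]; split_ifs <;> omega

abbrev FaceIndex (n m : ℕ) : Type :=
  Option {q : Fin n × Fin n // ¬(n + 1 - m ≤ (q.1 : ℕ) ∧ m - 1 ≤ (q.2 : ℕ))}

def facePos {n m : ℕ} (x : FaceIndex n m) : Fin (n + 1) × Fin (n + 1) :=
  x.elim (Fin.last n, 0) fun q => liftPos q.1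

section facePos

variable {n m : ℕ}

theorem card_faceIndex (hm : 1 ≤ m) (hmn : m ≤ n + 1) :
    Fintype.card (FaceIndex n m) = n ^ 2 + 1 - (m - 1) * (n + 1 - m) := by
  rw [Fintype.card_option, card_fin_sq_not_corner, show n - (n + 1 - m) = m - 1 by omega,
    show n - (m - 1) = n + 1 - m by omega]
  refine (Nat.sub_add_comm ?_).symm
  exact sq n ▸ Nat.mul_le_mul (by omega) (by omega)

theorem facePos_injective : Function.Injective (facePos (n := n) (m := m)) := by
  rintro (_ | q) (_ | q') h
  · rfl
  · have := liftPos_add_lt_or_lt q'.1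
    simp only [facePos, Option.elim] at h
    rw [← h] at this; simp at this
  · have := liftPos_add_lt_or_lt q.1
    simp only [facePos, Option.elim] at h
    rw [h] at this; simp at this
  · exact congrArg some (Subtype.ext (liftPos_injective h))

theorem facePos_add_ne (x : FaceIndex n m) : ((facePos x).1 : ℕ) + (facePos x).2 ≠ n + 1 := by
  rcases x with _ | q
  · simp [facePos]
  · have := liftPos_add_lt_or_lt q.1
    simp only [facePos, Option.elim]; omega

theorem eq_none_of_facePos_add_eq {x : FaceIndex n m}
    (hx : ((facePos x).1 : ℕ) + (facePos x).2 + 1 = n + 1) : x = none := by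
  rcases x with _ | q
  · rfl
  · have := liftPos_add_lt_or_lt q.1
    simp only [facePos, Option.elim] at hx; omega

theorem facePos_snd_lt_of_lt_fst_add (x : FaceIndex n m) :
    n + 1 < (facePos x).1 + m → ((facePos x).2 : ℕ) < m := by
  rcases x with _ | q
  · simp only [facePos, Option.elim, Fin.val_zero]; omega
  · exact liftPos_snd_lt_of_lt_fst_add q.1 q.2

end facePos

/-- the rectangular flag-shaped blocker `B_n(m, m-1)` admits
`(n-1)² + 1 - (m-1)(n-m)` linearly independent permutation matrices of
`123`-avoiding permutations, each meeting it exactly once. -/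
theorem rectangular_flagBlocker_max_dim (n m : ℕ) (hm1 : 1 ≤ m) (hmn : m ≤ n) :
    ∃ σ : Fin ((n - 1) ^ 2 + 1 - (m - 1) * (n - m)) → Equiv.Perm (Fin n),
      (∀ a, Avoids123 (σ a)) ∧
      (∀ a, ∃! i : Fin n, (i, σ a i) ∈ FlagBlocker n m (m - 1)) ∧
      LinearIndependent ℝ fun a => permMatrix n (σ a) := by
  obtain ⟨n, rfl⟩ : ∃ k, n = k + 1 := ⟨n - 1, by omega⟩
  let e : Fin (n ^ 2 + 1 - (m - 1) * (n + 1 - m)) ≃ FaceIndex n m :=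
    (Fintype.equivFinOfCardEq (card_faceIndex hm1 hmn)).symm
  refine ⟨fun a => reverseThrough (facePos (e a)), fun a => avoids123_reverseThrough _,
    fun a => existsUnique_mem_flagBlocker_reverseThrough hm1 hmn _
      (facePos_snd_lt_of_lt_fst_add _), ?_⟩
  exact (linearIndependent_permMatrix_reverseThrough facePos facePos_injective facePos_add_ne
    fun x y hx hy => (eq_none_of_facePos_add_eq hx).trans (eq_none_of_facePos_add_eq hy).symm).comp
      e e.injective
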